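/- arXiv:2101.09772 — 6 statements merged into one kernel-verified Lean document; each statement's English description precedes it below -/
import Mathlib

section
/- Let G be a group with at least 2 elements. If H is a subgroup of G × G that contains the ordered configuration set F(G,2) = {(g₁,g₂) ∈ G × G : g₁ ≠ g₂}, then H = G × G. -/
/-- If a subgroup `H` of `G × G` contains the configuration set
`F(G,2) = {(g₁,g₂) | g₁ ≠ g₂}`, then `H = G × G`. -/
theorem configuration_subset_subgroup_eq_top {G : Type*} [Group G] [Nontrivial G]
    (H : Subgroup (G × G)) (h : {x : G × G | x.1 ≠ x.2} ⊆ (H : Set (G × G))) :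
    H = ⊤ := by
  ext ⟨a, b⟩
  simp only [Subgroup.mem_top, iff_true]
  by_cases hab : a ≠ b
  · exact h hab
  · push_neg at hab
    subst hab
    obtain ⟨c, hc⟩ := exists_ne (1 : G)
    have h1 : ((a, a * c) : G × G) ∈ H := h (by simp [hc])
    have h2 : ((1, c⁻¹) : G × G) ∈ H := h (by simp [hc])
    have := H.mul_mem h1 h2
    simpa using this
end

section
/- Let G be a finite abelian group of order k ≥ 3. Then the ordered configuration set F(G,k) is not a generating set of G^k, i.e., the subgroup of G^k generated by F(G,k) is a proper subgroup. -/
/-- If `G` is a finite abelian group of order `k ≥ 3`, then `F(G,k)` does not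
generate `G^k`. -/
theorem configuration_not_generating_of_comm_card_eq {G : Type*} [CommGroup G] [Fintype G]
    (k : ℕ) (hk : 3 ≤ k) (hcard : Fintype.card G = k) :
    Subgroup.closure {g : Fin k → G | Function.Injective g} ≠ ⊤ := by
  classical
  set c : G := ∏ x : G, x with hc
  -- the product homomorphism
  let φ : (Fin k → G) →* G := MonoidHom.mk' (fun g => ∏ i, g i)
    (by intro a b; simp [Finset.prod_mul_distrib])
  have hcinv : c⁻¹ = c := by
    rw [hc, ← Finset.prod_inv_distrib]
    exact Fintype.prod_equiv (Equiv.inv G) _ _ (fun x => rfl)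
  have hc2 : c ^ 2 = 1 := by
    rw [sq]; nth_rewrite 2 [← hcinv]; exact mul_inv_cancel c
  -- every injective tuple maps to c
  have hgen : {g : Fin k → G | Function.Injective g} ⊆ (Subgroup.closure {c}).comap φ := by
    intro g hg
    have hbij : Function.Bijective g := by
      rw [Fintype.bijective_iff_injective_and_card]
      exact ⟨hg, by simp [hcard]⟩
    have : φ g = c := by
      show (∏ i, g i) = c
      rw [hc]
      exact Fintype.prod_bijective g hbij _ _ (fun x => rfl)
    simp only [SetLike.mem_coe, Subgroup.mem_comap, this]
    exact Subgroup.subset_closure rfl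
  intro htop
  have hle : Subgroup.closure {g : Fin k → G | Function.Injective g} ≤
      (Subgroup.closure {c}).comap φ := (Subgroup.closure_le _).2 hgen
  rw [htop] at hle
  -- so every element of G lies in ⟨c⟩
  have hall : ∀ a : G, a ∈ Subgroup.closure {c} := by
    intro a
    have hk0 : 0 < k := by omega
    set i0 : Fin k := ⟨0, hk0⟩ with hi0
    have := hle (Subgroup.mem_top (fun i => if i = i0 then a else 1))
    rw [Subgroup.mem_comap] at this
    have hφ : φ (fun i => if i = i0 then a else 1) = a := by
      show (∏ i : Fin k, if i = i0 then a else 1) = a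
      simp [Finset.prod_ite_eq']
    rwa [hφ] at this
  have htop' : Subgroup.closure {c} = ⊤ := by
    rw [Subgroup.eq_top_iff']; exact hall
  have hz : Subgroup.zpowers c = ⊤ := by rw [Subgroup.zpowers_eq_closure, htop']
  have hcard' : Fintype.card G = orderOf c := by
    rw [← Nat.card_zpowers, hz]
    rw [Subgroup.card_top, Nat.card_eq_fintype_card]
  have : orderOf c ≤ 2 := Nat.le_of_dvd (by norm_num) (orderOf_dvd_of_pow_eq_one hc2)
  omega
end

section
/- Let G be a group, k ≥ 3 an integer, and suppose |G| ≥ k + 1. Then every element of G^k having all coordinates equal to the identity except possibly one (i.e., every element of E_k) belongs to the subgroup of G^k generated by F(G,k). -/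
/-- For `k ≥ 3` and `|G| ≥ k + 1`, every tuple in `G^k` with at most one
coordinate different from `1` lies in the subgroup generated by `F(G,k)`. -/
theorem almost_trivial_tuple_mem_closure_configuration {G : Type*} [Group G]
    (k : ℕ) (hk : 3 ≤ k) (hG : ((k + 1 : ℕ) : Cardinal) ≤ Cardinal.mk G)
    (g : Fin k → G) (hg : ∃ i, ∀ j, j ≠ i → g j = 1) :
    g ∈ Subgroup.closure {x : Fin k → G | Function.Injective x} := by
  classical
  obtain ⟨i, hi⟩ := hg
  set h := g i with hh
  -- an embedding of `Fin (k+1)` into `G`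
  have hmk : Cardinal.mk (ULift.{_} (Fin (k + 1))) = ((k + 1 : ℕ) : Cardinal) := by
    simp
  rw [← hmk, Cardinal.le_def] at hG
  obtain ⟨f'⟩ := hG
  set f := (Equiv.ulift.symm.toEmbedding.trans f') with hfdef
  have him : (Finset.univ.image f).card = k + 1 := by
    rw [Finset.card_image_of_injective _ f.injective, Finset.card_univ, Fintype.card_fin]
  have hS : k ≤ (Finset.univ.image f \ {1}).card := by
    have h1 := Finset.le_card_sdiff ({1} : Finset G) (Finset.univ.image f)
    simp only [Finset.card_singleton, him] at h1
    omega
  obtain ⟨T, hTsub, hTcard⟩ := Finset.exists_subset_card_eq hS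
  set eT := T.equivFinOfCardEq hTcard
  set f0 : Fin k → G := fun j => ((eT.symm j : T) : G) with hf0
  have hf0inj : Function.Injective f0 := by
    intro a b hab
    have : (eT.symm a : T) = eT.symm b := Subtype.ext hab
    simpa using eT.symm.injective this
  have hf0T : ∀ j, f0 j ∈ T := fun j => (eT.symm j).2
  have hf01 : ∀ j, f0 j ≠ 1 := by
    intro j
    have := hTsub (hf0T j)
    simp only [Finset.mem_sdiff, Finset.mem_singleton] at this
    exact this.2
  -- build `e` injective, never 1, and avoiding `h` away from `i`
  obtain ⟨e, heinj, he1, heh⟩ :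
      ∃ e : Fin k → G, Function.Injective e ∧ (∀ j, e j ≠ 1) ∧ ∀ j, j ≠ i → e j ≠ h := by
    by_cases hc : ∃ j0, f0 j0 = h
    · obtain ⟨j0, hj0⟩ := hc
      refine ⟨f0 ∘ Equiv.swap i j0, hf0inj.comp (Equiv.swap i j0).injective,
        fun j => hf01 _, ?_⟩
      intro j hj hEq
      have hei : (f0 ∘ Equiv.swap i j0) i = h := by
        simp [Equiv.swap_apply_left, hj0]
      exact hj ((hf0inj.comp (Equiv.swap i j0).injective) (hEq.trans hei.symm))
    · push_neg at hc
      exact ⟨f0, hf0inj, hf01, fun j _ => hc j⟩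
  -- the two injective tuples
  set x : Fin k → G := fun j => if j = i then h else e j with hx
  set x' : Fin k → G := fun j => if j = i then 1 else e j with hx'
  have hxinj : Function.Injective x := by
    intro a b hab
    simp only [hx] at hab
    by_cases ha : a = i <;> by_cases hb : b = i
    · rw [ha, hb]
    · simp only [ha, hb, if_pos, if_neg, if_true] at hab
      exact absurd hab.symm (heh b hb)
    · simp only [ha, hb, if_pos, if_neg, if_true] at hab
      exact absurd hab (heh a ha)
    · simp only [ha, hb, if_neg] at hab
      exact heinj hab
  have hx'inj : Function.Injective x' := by
    intro a b hab
    simp only [hx'] at hab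
    by_cases ha : a = i <;> by_cases hb : b = i
    · rw [ha, hb]
    · simp only [ha, hb, if_pos, if_neg, if_true] at hab
      exact absurd hab.symm (he1 b)
    · simp only [ha, hb, if_pos, if_neg, if_true] at hab
      exact absurd hab (he1 a)
    · simp only [ha, hb, if_neg] at hab
      exact heinj hab
  have hgeq : g = x * x'⁻¹ := by
    funext j
    by_cases hji : j = i
    · simp [hx, hx', hji, hh]
    · simp [hx, hx', hji, hi j hji]
  rw [hgeq]
  exact mul_mem (Subgroup.subset_closure hxinj)
    (inv_mem (Subgroup.subset_closure hx'inj))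
end

section
/- Let G be a group, k ≥ 3 an integer, and suppose |G| ≥ k + 1 (in particular this holds when G is infinite). Then the subgroup of G^k generated by the ordered configuration set F(G,k) is all of G^k. -/
/-- For `k ≥ 3` and `|G| ≥ k + 1`, the configuration set `F(G,k)` generates
`G^k`. -/
theorem closure_configuration_eq_top {G : Type*} [Group G]
    (k : ℕ) (hk : 3 ≤ k) (hG : ((k + 1 : ℕ) : Cardinal) ≤ Cardinal.mk G) :
    Subgroup.closure {x : Fin k → G | Function.Injective x} = ⊤ := by
  classical
  obtain ⟨m, rfl⟩ : ∃ m, k = m + 1 := ⟨k - 1, by omega⟩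
  set J := Subgroup.closure {x : Fin (m + 1) → G | Function.Injective x} with hJ
  -- an embedding of Fin (m+2) into G
  obtain ⟨f⟩ : Nonempty (Fin (m + 2) ↪ G) := by
    rw [← Cardinal.lift_mk_le', Cardinal.mk_fin, Cardinal.lift_natCast]
    have : ((m + 2 : ℕ) : Cardinal) ≤ Cardinal.mk G := by exact_mod_cast hG
    simpa using this
  -- every mulSingle is in J
  have key : ∀ (i : Fin (m + 1)) (g : G), Pi.mulSingle i g ∈ J := by
    intro i g
    set s : Finset G := Finset.univ.image f with hs
    have hscard : s.card = m + 2 := by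
      rw [hs, Finset.card_image_of_injective _ f.injective, Finset.card_univ,
        Fintype.card_fin]
    have hcard : m ≤ (s \ {g, 1}).card := by
      have h1 := Finset.le_card_sdiff ({g, 1} : Finset G) s
      have h2 : ({g, 1} : Finset G).card ≤ 2 :=
        (Finset.card_insert_le _ _).trans (by simp)
      omega
    obtain ⟨t, hts, htc⟩ := Finset.exists_subset_card_eq hcard
    have htc' : Fintype.card t = m := by simpa using htc
    let e := (Fintype.equivFinOfCardEq htc').symm
    let c : Fin m → G := fun j => (e j : G)
    have hc_inj : Function.Injective c := fun a b h => e.injective (Subtype.ext h)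
    have hc_ne : ∀ j, c j ≠ g ∧ c j ≠ 1 := by
      intro j
      have hmem := hts (e j).2
      rw [Finset.mem_sdiff, Finset.mem_insert, Finset.mem_singleton] at hmem
      exact ⟨fun h => hmem.2 (Or.inl h), fun h => hmem.2 (Or.inr h)⟩
    -- injectivity of insertNth for values avoiding range c
    have hins : ∀ x : G, (∀ j, c j ≠ x) →
        Function.Injective (Fin.insertNth (α := fun _ => G) i x c) := by
      intro x hx a b hab
      rcases eq_or_ne a i with ha | ha
      · rcases eq_or_ne b i with hbi | hbi
        · rw [ha, hbi]
        · obtain ⟨b', hb'⟩ := Fin.exists_succAbove_eq hbi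
          rw [ha, Fin.insertNth_apply_same, ← hb',
            Fin.insertNth_apply_succAbove] at hab
          exact absurd hab.symm (hx b')
      · obtain ⟨a', ha'⟩ := Fin.exists_succAbove_eq ha
        rcases eq_or_ne b i with hbi | hbi
        · rw [hbi, Fin.insertNth_apply_same, ← ha',
            Fin.insertNth_apply_succAbove] at hab
          exact absurd hab (hx a')
        · obtain ⟨b', hb'⟩ := Fin.exists_succAbove_eq hbi
          rw [← ha', ← hb', Fin.insertNth_apply_succAbove,
            Fin.insertNth_apply_succAbove] at hab
          rw [← ha', ← hb', hc_inj hab]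
    have ha : Function.Injective (Fin.insertNth (α := fun _ => G) i g c) :=
      hins g fun j => (hc_ne j).1
    have hb : Function.Injective (Fin.insertNth (α := fun _ => G) i 1 c) :=
      hins 1 fun j => (hc_ne j).2
    have heq : Pi.mulSingle i g =
        Fin.insertNth (α := fun _ => G) i g c *
          (Fin.insertNth (α := fun _ => G) i 1 c)⁻¹ := by
      funext j
      rcases eq_or_ne j i with rfl | hj
      · simp
      · obtain ⟨j', hj'⟩ := Fin.exists_succAbove_eq hj
        rw [Pi.mul_apply, Pi.inv_apply, ← hj', Fin.insertNth_apply_succAbove,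
          Fin.insertNth_apply_succAbove, mul_inv_cancel, Pi.mulSingle,
          Function.update_of_ne (hj'.symm ▸ hj)]
        rfl
    rw [heq]
    exact mul_mem (Subgroup.subset_closure ha) (inv_mem (Subgroup.subset_closure hb))
  -- conclude: J = ⊤
  rw [eq_top_iff]
  intro x _
  have main : ∀ s : Finset (Fin (m + 1)), ∀ y : Fin (m + 1) → G,
      (∀ j, j ∉ s → y j = 1) → y ∈ J := by
    intro s
    induction s using Finset.induction_on with
    | empty =>
      intro y hy
      have : y = 1 := funext fun j => hy j (Finset.notMem_empty j)
      rw [this]; exact one_mem J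
    | @insert a s' hnotmem ih =>
      intro y hy
      have heq : y = Pi.mulSingle a (y a) * Function.update y a 1 := by
        funext j
        rcases eq_or_ne j a with rfl | hj
        · simp
        · simp [Pi.mulSingle, Function.update_of_ne hj, hj]
      rw [heq]
      refine mul_mem (key a (y a)) (ih _ ?_)
      intro j hj
      rcases eq_or_ne j a with rfl | hja
      · simp
      · rw [Function.update_of_ne hja]
        exact hy j (by simp [hja, hj])
  exact main Finset.univ x fun j hj => absurd (Finset.mem_univ j) hj
end

section
/- Let p ≥ 3 be a prime. Then the configuration group F̄(ℤ_p, p) = ⟨F(ℤ_p, p)⟩ is a ℤ_p-linear subspace of ℤ_p^p equal to the kernel of the norm map {(x₁,…,x_p) ∈ ℤ_p^p : x₁ + ⋯ + x_p = 0}; in particular it has dimension p − 1 over ℤ_p and is isomorphic as a ℤ_p-vector space to ℤ_p^{p−1}. -/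
section aux

variable {p : ℕ}

lemma sum_zmod_eq_zero [NeZero p] (hp : p.Prime) (hp3 : 3 ≤ p) : (∑ x : ZMod p, x) = 0 := by
  haveI := Fact.mk hp
  have h : (∑ x : ZMod p, x) = ∑ x : ZMod p, -x :=
    Fintype.sum_equiv (Equiv.neg (ZMod p)) _ _ (fun x => by simp)
  have hadd : (∑ x : ZMod p, x) + (∑ x : ZMod p, x) = 0 := by
    nth_rewrite 2 [h]
    rw [← Finset.sum_add_distrib]
    simp
  have h2 : (2 : ZMod p) * (∑ x : ZMod p, x) = 0 := by
    rw [two_mul]; exact hadd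
  rcases mul_eq_zero.mp h2 with h' | h'
  · exfalso
    have h2' : ((2 : ℕ) : ZMod p) = 0 := by exact_mod_cast h'
    have := (ZMod.natCast_eq_zero_iff 2 p).mp h2'
    have := Nat.le_of_dvd (by norm_num) this
    omega
  · exact h'

end aux

/-- for a prime `p ≥ 3`, the configuration group `F̄(ℤ_p,p) = ⟨F(ℤ_p,p)⟩` is a
`ℤ_p`-linear subspace of `ℤ_p^p` equal to the kernel `{x | x₁ + ⋯ + x_p = 0}` of the norm
map; in particular it has dimension `p - 1` and is isomorphic to `ℤ_p^(p-1)`. -/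
theorem configuration_group_zmod_p {p : ℕ} (hp : p.Prime) (hp3 : 3 ≤ p) :
    (AddSubgroup.closure {g : Fin p → ZMod p | Function.Injective g} :
        Set (Fin p → ZMod p)) =
      (Submodule.span (ZMod p) {g : Fin p → ZMod p | Function.Injective g} :
        Set (Fin p → ZMod p)) ∧
    (AddSubgroup.closure {g : Fin p → ZMod p | Function.Injective g} :
        Set (Fin p → ZMod p)) =
      {x : Fin p → ZMod p | ∑ i, x i = 0} ∧
    Module.finrank (ZMod p)
      (Submodule.span (ZMod p) {g : Fin p → ZMod p | Function.Injective g}) = p - 1 ∧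
    Nonempty
      ((Submodule.span (ZMod p) {g : Fin p → ZMod p | Function.Injective g}) ≃ₗ[ZMod p]
        (Fin (p - 1) → ZMod p)) := by
  haveI : NeZero p := ⟨hp.pos.ne'⟩
  haveI := Fact.mk hp
  set s : Set (Fin p → ZMod p) := {g : Fin p → ZMod p | Function.Injective g} with hs
  -- closure = span as sets
  have hclspan : (AddSubgroup.closure s : Set (Fin p → ZMod p)) =
      (Submodule.span (ZMod p) s : Set (Fin p → ZMod p)) := by
    apply Set.eq_of_subset_of_subset
    · exact AddSubgroup.closure_le ((Submodule.span (ZMod p) s).toAddSubgroup) |>.mpr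
        Submodule.subset_span
    · exact Submodule.span_le (p := AddSubgroup.toZModSubmodule p (AddSubgroup.closure s)) |>.mpr
        AddSubgroup.subset_closure
  -- the norm linear map
  let f : (Fin p → ZMod p) →ₗ[ZMod p] ZMod p :=
    { toFun := fun x => ∑ i, x i
      map_add' := fun x y => by simp [Finset.sum_add_distrib]
      map_smul' := fun c x => by simp [Finset.mul_sum] }
  -- span ≤ ker f
  have hsub : Submodule.span (ZMod p) s ≤ LinearMap.ker f := by
    rw [Submodule.span_le]
    intro g hg
    have hbij : Function.Bijective g :=
      (Fintype.bijective_iff_injective_and_card g).mpr ⟨hg, by simp [ZMod.card]⟩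
    have hsum : ∑ i, g i = ∑ x : ZMod p, x :=
      Fintype.sum_bijective g hbij _ _ (fun i => rfl)
    simp only [SetLike.mem_coe, LinearMap.mem_ker]
    show ∑ i, g i = 0
    rw [hsum]; exact sum_zmod_eq_zero hp hp3
  -- basis vectors e_i - e_0 in span
  have hbase : ∀ i : Fin p,
      (Pi.single i 1 - Pi.single (0 : Fin p) 1 : Fin p → ZMod p) ∈ Submodule.span (ZMod p) s := by
    intro i
    by_cases hi : i = 0
    · simp [hi]
    · set c : Fin p → ZMod p := fun k => (k.val : ZMod p) with hc
      have hcinj : Function.Injective c := by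
        intro a b h
        apply Fin.ext
        have := congrArg ZMod.val h
        rwa [hc, ZMod.val_natCast_of_lt a.isLt, ZMod.val_natCast_of_lt b.isLt] at this
      have hc' : Function.Injective (c ∘ Equiv.swap i 0) :=
        hcinj.comp (Equiv.injective _)
      have hmem : c - c ∘ Equiv.swap i 0 ∈ Submodule.span (ZMod p) s :=
        Submodule.sub_mem _ (Submodule.subset_span hcinj) (Submodule.subset_span hc')
      have hne : (i.val : ZMod p) ≠ 0 := by
        intro h
        have hdvd := (ZMod.natCast_eq_zero_iff i.val p).mp h
        exact hi (Fin.ext (Nat.eq_zero_of_dvd_of_lt hdvd i.isLt))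
      have hkey : c - c ∘ Equiv.swap i 0 =
          (i.val : ZMod p) • (Pi.single i 1 - Pi.single (0 : Fin p) 1) := by
        funext k
        by_cases hk : k = i
        · subst hk
          simp [Equiv.swap_apply_left, Pi.single_eq_same, Pi.single_eq_of_ne hi, hc]
        · by_cases hk0 : k = 0
          · subst hk0
            simp [Equiv.swap_apply_right, Pi.single_eq_same,
              Pi.single_eq_of_ne (Ne.symm hi), hc]
          · simp [Equiv.swap_apply_of_ne_of_ne hk hk0, Pi.single_eq_of_ne hk,
              Pi.single_eq_of_ne hk0]
      have : (Pi.single i 1 - Pi.single (0 : Fin p) 1 : Fin p → ZMod p) =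
          ((i.val : ZMod p))⁻¹ • (c - c ∘ Equiv.swap i 0) := by
        rw [hkey, smul_smul, inv_mul_cancel₀ hne, one_smul]
      rw [this]
      exact Submodule.smul_mem _ _ hmem
  -- ker f ≤ span
  have hsup : LinearMap.ker f ≤ Submodule.span (ZMod p) s := by
    intro x hx
    have hx0 : ∑ i, x i = 0 := hx
    have hrepr : x = ∑ i, x i • (Pi.single i 1 - Pi.single (0 : Fin p) 1 : Fin p → ZMod p) := by
      have h1 : x = ∑ i, x i • (Pi.single i 1 : Fin p → ZMod p) := by
        funext k
        simp [Finset.sum_apply, Pi.single_apply, Finset.sum_ite_eq', mul_comm]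
      calc x = ∑ i, x i • (Pi.single i 1 : Fin p → ZMod p) := h1
        _ = ∑ i, (x i • (Pi.single i 1 - Pi.single (0 : Fin p) 1 : Fin p → ZMod p)
              + x i • (Pi.single (0 : Fin p) 1 : Fin p → ZMod p)) := by
            congr 1; funext i; rw [← smul_add]; congr 1; abel
        _ = (∑ i, x i • (Pi.single i 1 - Pi.single (0 : Fin p) 1 : Fin p → ZMod p))
              + (∑ i, x i) • (Pi.single (0 : Fin p) 1 : Fin p → ZMod p) := by
            rw [Finset.sum_add_distrib, Finset.sum_smul]
        _ = ∑ i, x i • (Pi.single i 1 - Pi.single (0 : Fin p) 1 : Fin p → ZMod p) := by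
            rw [hx0, zero_smul, add_zero]
    rw [hrepr]
    exact Submodule.sum_mem _ (fun i _ => Submodule.smul_mem _ _ (hbase i))
  have hker : Submodule.span (ZMod p) s = LinearMap.ker f := le_antisymm hsub hsup
  -- f is surjective
  have hfsurj : LinearMap.range f = ⊤ := by
    rw [LinearMap.range_eq_top]
    intro y
    exact ⟨Pi.single 0 y, by simp [f, Pi.single_apply]⟩
  -- finrank of kernel
  have hrank : Module.finrank (ZMod p) (LinearMap.ker f) = p - 1 := by
    have := LinearMap.finrank_range_add_finrank_ker f
    rw [hfsurj] at this
    simp only [finrank_top, Module.finrank_self] at this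
    have hpi : Module.finrank (ZMod p) (Fin p → ZMod p) = p := by simp
    omega
  have hrank' : Module.finrank (ZMod p) (Submodule.span (ZMod p) s) = p - 1 := by
    rw [hker]; exact hrank
  refine ⟨hclspan, ?_, hrank', ?_⟩
  · rw [hclspan, hker]
    rfl
  · refine ⟨LinearEquiv.ofFinrankEq _ _ ?_⟩
    rw [hrank']
    simp
end

section
/- Let G be a group and k ≥ 1. (1) If k = 2 and |G| ≥ 2, or if k ≥ 3 and |G| ≥ k + 1, then the Cayley graph Cay(G^k, F(G,k)) is path-connected. (2) If G is a finite abelian group with |G| = k ≥ 3, then the Cayley graph Cay(G^k, F(G,k)) is not path-connected. -/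
/-!
`Cay(H, S)` is connected iff `S` generates `H`, since the vertices reachable from `u` are
exactly `u * ⟨S⟩`. For `F(G,k)` it therefore suffices to write each `Pi.mulSingle i a` as a
product of injective tuples. For `k = 2` it is itself injective when `a ≠ 1`. When
`|G| ≥ k + 1`, choose an injective `v` with `v i = 1` whose values avoid `a`; then
`Pi.mulSingle i a * v = update v i a` is injective too.

If `G` is abelian of order `k`, an injective `k`-tuple is a bijection onto `G`, so its
coordinate product is `c = ∏ g, g`, and `c = c⁻¹`. Hence the coordinate-product homomorphism,
which is onto `G`, maps `⟨F(G,k)⟩` into `⟨c⟩`, a subgroup of order at most `2 < |G|`.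
-/

/-- The Cayley graph of `G^k` with respect to `F(G,k)`: vertices `G^k`, with `x,y`
adjacent when `x⁻¹y ∈ F(G,k)` (the set `F(G,k)` is symmetric and misses the identity for
`k ≥ 2`, so `SimpleGraph.fromRel` yields exactly this graph). -/
def cayleyConf (G : Type*) [Group G] (k : ℕ) : SimpleGraph (Fin k → G) :=
  SimpleGraph.fromRel fun x y => x⁻¹ * y ∈ {g : Fin k → G | Function.Injective g}

open Function Subgroup Cardinal

namespace SimpleGraph

variable {M : Type*} [Group M] (s : Set M)

theorem mulCayley_reachable_mul {g : M} (hg : g ∈ s) (u : M) :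
    (mulCayley s).Reachable u (u * g) := by
  by_cases hu : u = u * g
  · rw [← hu]
  · exact Adj.reachable ((mulCayley_adj s _ _).2 ⟨hu, .inl (by simpa using hg)⟩)

theorem mulCayley_reachable_iff {u v : M} :
    (mulCayley s).Reachable u v ↔ u⁻¹ * v ∈ closure s := by
  constructor
  · rw [reachable_iff_reflTransGen]
    intro h
    induction h with
    | refl => simp
    | @tail w x _ hadj ih =>
      have hstep : w⁻¹ * x ∈ closure s := by
        rcases ((mulCayley_adj s w x).1 hadj).2 with h | h
        · exact subset_closure h
        · simpa using inv_mem (subset_closure h)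
      simpa [mul_assoc] using mul_mem ih hstep
  · intro h
    suffices ∀ g ∈ closure s, ∀ u, (mulCayley s).Reachable u (u * g) by
      simpa using this _ h u
    intro g hg
    induction hg using closure_induction_left with
    | one => simp
    | mul_left x hx y _ ih =>
      exact fun u => (mulCayley_reachable_mul s hx u).trans
        (by simpa [mul_assoc] using ih (u * x))
    | inv_mul_cancel x hx y _ ih =>
      refine fun u => .trans ?_ (by simpa [mul_assoc] using ih (u * x⁻¹))
      simpa using (mulCayley_reachable_mul s hx (u * x⁻¹)).symm

theorem mulCayley_connected_iff : (mulCayley s).Connected ↔ closure s = ⊤ :=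
  ⟨fun h => (eq_top_iff' _).2 fun g => by simpa using (mulCayley_reachable_iff s).1 (h 1 g),
    fun h => (connected_iff _).2 ⟨fun _ _ => (mulCayley_reachable_iff s).2 (h ▸ mem_top _), ⟨1⟩⟩⟩

end SimpleGraph

section Configuration

variable {G : Type*}

theorem cayleyConf_eq_mulCayley [Group G] (k : ℕ) :
    cayleyConf G k = SimpleGraph.mulCayley {g : Fin k → G | Injective g} := by
  ext x y
  simp [cayleyConf, SimpleGraph.mulCayley_adj]

theorem mulSingle_mem_closure_setOf_injective_fin_two [Group G] (i : Fin 2) (a : G) :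
    Pi.mulSingle i a ∈ closure {g : Fin 2 → G | Injective g} := by
  rcases eq_or_ne a 1 with rfl | ha
  · simp
  refine subset_closure fun j₁ j₂ h => ?_
  fin_cases i <;> fin_cases j₁ <;> fin_cases j₂ <;> simp_all [eq_comm]

theorem exists_injective_apply_eq_one_forall_ne [Group G] {k : ℕ}
    (hG : ((k + 1 : ℕ) : Cardinal) ≤ #G) (i : Fin k) {a : G} (ha : a ≠ 1) :
    ∃ v : Fin k → G, Injective v ∧ v i = 1 ∧ ∀ j, v j ≠ a := by
  have hcompl : (k : Cardinal) ≤ #({a}ᶜ : Set G) := by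
    rw [Nat.cast_succ, ← mk_sum_compl {a}, mk_singleton, add_comm 1] at hG
    exact add_one_le_add_one_iff.1 hG
  obtain ⟨e⟩ : Nonempty (Fin k ↪ ({a}ᶜ : Set G)) := lift_mk_le'.1 (by simpa using hcompl)
  classical
  let σ := Equiv.swap (e i) ⟨1, ha.symm⟩
  refine ⟨fun j => σ (e j), ?_, by simp [σ], fun j => (σ (e j)).2⟩
  exact Subtype.val_injective.comp (σ.injective.comp e.injective)

theorem mulSingle_mem_closure_setOf_injective [Group G] {k : ℕ}
    (hG : ((k + 1 : ℕ) : Cardinal) ≤ #G) (i : Fin k) (a : G) :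
    Pi.mulSingle i a ∈ closure {g : Fin k → G | Injective g} := by
  rcases eq_or_ne a 1 with rfl | ha
  · simp
  obtain ⟨v, hv, hvi, hva⟩ := exists_injective_apply_eq_one_forall_ne hG i ha
  have hupdate : Pi.mulSingle i a * v = update v i a := by
    ext j
    rcases eq_or_ne j i with rfl | hj <;> simp [*]
  have hinj : Injective (Pi.mulSingle i a * v) := by
    rw [hupdate]
    intro j₁ j₂ h
    grind [update_apply]
  have hmem {g : Fin k → G} (hg : Injective g) : g ∈ closure {g : Fin k → G | Injective g} :=
    subset_closure hg
  simpa using mul_mem (hmem hinj) (inv_mem (hmem hv))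

theorem inv_prod_univ_id [CommGroup G] [Fintype G] : (∏ g : G, g)⁻¹ = ∏ g : G, g := by
  rw [← Finset.prod_inv_distrib]
  exact Fintype.prod_equiv (Equiv.inv G) _ _ fun _ => rfl

theorem prod_eq_prod_univ_id_of_injective [CommGroup G] [Fintype G] {ι : Type*} [Fintype ι]
    {s : ι → G} (hs : Injective s) (hcard : Fintype.card ι = Fintype.card G) :
    ∏ i, s i = ∏ g : G, g :=
  ((Fintype.bijective_iff_injective_and_card s).2 ⟨hs, hcard⟩).prod_comp id

theorem closure_setOf_injective_ne_top [CommGroup G] [Fintype G] {k : ℕ}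
    (hk : Fintype.card G = k) (h3 : 3 ≤ k) :
    closure {g : Fin k → G | Injective g} ≠ ⊤ := by
  set c := ∏ g : G, g
  let φ : (Fin k → G) →* G := ∏ i, Pi.evalMonoidHom (fun _ => G) i
  have hφ : ∀ x, φ x = ∏ i, x i := fun x => by simp [φ]
  have hle : closure {g : Fin k → G | Injective g} ≤ (zpowers c).comap φ :=
    (closure_le _).2 fun s hs => by
      simp [hφ, prod_eq_prod_univ_id_of_injective hs (by simp [hk]), c]
  intro htop
  have hc_top : zpowers c = ⊤ := (eq_top_iff' _).2 fun g => by
    have := hle (htop ▸ mem_top (Pi.mulSingle (⟨0, by omega⟩ : Fin k) g))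
    rwa [mem_comap, hφ, Fintype.prod_pi_mulSingle'] at this
  have hord : orderOf c ≤ 2 :=
    orderOf_le_of_pow_eq_one two_pos (by rw [sq, mul_eq_one_iff_eq_inv, inv_prod_univ_id])
  have := Nat.card_zpowers c
  rw [hc_top, card_top, Nat.card_eq_fintype_card] at this
  omega

end Configuration

/-- (1) if `k = 2` and `|G| ≥ 2`, or `k ≥ 3` and `|G| ≥ k + 1`, then
`Cay(G^k, F(G,k))` is path-connected; (2) if `G` is finite abelian with `|G| = k ≥ 3`, then
`Cay(G^k, F(G,k))` is not path-connected. -/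
theorem cayley_graph_configuration_connected_iff (G : Type*) [Group G] (k : ℕ) :
    (((k = 2 ∧ ((2 : ℕ) : Cardinal) ≤ Cardinal.mk G) ∨
        (3 ≤ k ∧ ((k + 1 : ℕ) : Cardinal) ≤ Cardinal.mk G)) →
      (cayleyConf G k).Connected) ∧
    ((Finite G ∧ (∀ a b : G, a * b = b * a) ∧ Nat.card G = k ∧ 3 ≤ k) →
      ¬ (cayleyConf G k).Connected) := by
  refine ⟨fun h => ?_, fun ⟨_, hcomm, hcard, h3⟩ => ?_⟩
  · rw [cayleyConf_eq_mulCayley, SimpleGraph.mulCayley_connected_iff]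
    refine (eq_top_iff' _).2 fun x => pi_mem_of_mulSingle_mem x fun i => ?_
    rcases h with ⟨rfl, -⟩ | ⟨-, hG⟩
    · exact mulSingle_mem_closure_setOf_injective_fin_two i (x i)
    · exact mulSingle_mem_closure_setOf_injective hG i (x i)
  · have := Fintype.ofFinite G
    let _ : CommGroup G := { ‹Group G› with mul_comm := hcomm }
    rw [cayleyConf_eq_mulCayley, SimpleGraph.mulCayley_connected_iff]
    exact closure_setOf_injective_ne_top (Nat.card_eq_fintype_card.symm.trans hcard) h3
end
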